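/- arXiv:2004.14866 — 3 statements merged into one kernel-verified Lean document; each statement's English description precedes it below -/
import Mathlib

section
/- Let A, G be symmetric positive definite n×n matrices, u ∈ ℝ^n nonzero, τ ∈ [0,1], and G₊ := Broyd_τ(A, G, u). Then G₊ is invertible and G₊⁻¹ = τ·[ G⁻¹ − (G⁻¹A u uᵀ A G⁻¹)/⟨AG⁻¹Au, u⟩ + (u uᵀ)/⟨Au, u⟩ ] + (1−τ)·[ G⁻¹ − (G⁻¹A u uᵀ + u uᵀ A G⁻¹)/⟨Au, u⟩ + (⟨AG⁻¹Au, u⟩/⟨Au, u⟩ + 1)·(u uᵀ)/⟨Au, u⟩ ]. -/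
open Matrix Finset

/-- The Broyden family update of a Hessian approximation `G` with respect to
the target matrix `A` along direction `u`, parameterized by `τ`. -/
noncomputable def broyd {n : ℕ} (τ : ℝ) (A G : Matrix (Fin n) (Fin n) ℝ) (u : Fin n → ℝ) :
    Matrix (Fin n) (Fin n) ℝ :=
  if u = 0 then G
  else
    let aUU : ℝ := u ⬝ᵥ A.mulVec u
    let gUU : ℝ := u ⬝ᵥ G.mulVec u
    let agaUU : ℝ := u ⬝ᵥ (A * G⁻¹ * A).mulVec u
    let ρ : ℝ := gUU / aUU
    let φ : ℝ := τ * (aUU / agaUU) / (τ * (aUU / agaUU) + (1 - τ) * ρ)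
    φ • (G - aUU⁻¹ • (A * vecMulVec u u * G + G * vecMulVec u u * A)
          + ((ρ + 1) / aUU) • (A * vecMulVec u u * A)) +
    (1 - φ) • (G - gUU⁻¹ • (G * vecMulVec u u * G) + aUU⁻¹ • (A * vecMulVec u u * A))

/-- `psdLE P Q` (i.e. `P ⪯ Q`) : the matrix `Q - P` is positive semidefinite. -/
def psdLE {n : ℕ} (P Q : Matrix (Fin n) (Fin n) ℝ) : Prop := (Q - P).PosSemidef

/-- The closeness measure ν(A, G, u). -/
noncomputable def nuMeas {n : ℕ} (A G : Matrix (Fin n) (Fin n) ℝ) (u : Fin n → ℝ) : ℝ :=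
  Real.sqrt ((u ⬝ᵥ ((G - A) * G⁻¹ * (G - A)).mulVec u) / (u ⬝ᵥ A.mulVec u))

/-- The log-det barrier V(A, G) = ln det (A⁻¹ G). -/
noncomputable def logDetBarrier {n : ℕ} (A G : Matrix (Fin n) (Fin n) ℝ) : ℝ :=
  Real.log (A⁻¹ * G).det

/-- The augmented log-det barrier ψ(G, A) = ln det (A⁻¹ G) - tr (G⁻¹ (G - A)). -/
noncomputable def psiBarrier {n : ℕ} (G A : Matrix (Fin n) (Fin n) ℝ) : ℝ :=
  Real.log (A⁻¹ * G).det - (G⁻¹ * (G - A)).trace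

/-! With `y = A u`, `broyd τ A G u` is the Broyden-family update of `G` along the pair `(u, y)`,
and the claimed inverse is the Broyden-family update of `G⁻¹` along `(y, u)`, with the BFGS and
DFP parts exchanged. The product of the two is `1` plus a combination of the rank-one matrices
built from `u`, `y`, `G u` and `G⁻¹ y`; all its coefficients vanish precisely
because `φ (τ ⟪u, y⟫² + (1 - τ) ⟪u, G u⟫ ⟪y, G⁻¹ y⟫) = τ ⟪u, y⟫²`, which is how `φ_τ` is chosen. -/

section Symmetric

variable {m α : Type*} [Fintype m] [CommSemiring α]

theorem Matrix.IsSymm.vecMul_eq_mulVec {A : Matrix m m α} (hA : A.IsSymm) (x : m → α) :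
    x ᵥ* A = A *ᵥ x := by
  rw [← vecMul_transpose, hA.eq]

theorem Matrix.IsSymm.dotProduct_mul_mul_mulVec {A : Matrix m m α} (hA : A.IsSymm)
    (M : Matrix m m α) (u : m → α) :
    u ⬝ᵥ (A * M * A) *ᵥ u = A *ᵥ u ⬝ᵥ M *ᵥ (A *ᵥ u) := by
  rw [← mulVec_mulVec, ← mulVec_mulVec, dotProduct_mulVec, hA.vecMul_eq_mulVec]

end Symmetric

section BroydenFamily

variable {m 𝕜 : Type*} [Fintype m] [DecidableEq m] [Field 𝕜]

/-- The weight `φ_τ` of `broyd`, for `a = ⟪Au, u⟫`, `g = ⟪Gu, u⟫` and `s = ⟪AG⁻¹Au, u⟫`. -/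
def broydenWeight (τ a g s : 𝕜) : 𝕜 :=
  τ * (a / s) / (τ * (a / s) + (1 - τ) * (g / a))

theorem broydenWeight_mul {τ a g s : 𝕜} (ha : a ≠ 0) (hs : s ≠ 0)
    (hD : τ * a ^ 2 + (1 - τ) * (g * s) ≠ 0) :
    broydenWeight τ a g s * (τ * a ^ 2 + (1 - τ) * (g * s)) = τ * a ^ 2 := by
  have hD' : τ * (a / s) + (1 - τ) * (g / a) = (τ * a ^ 2 + (1 - τ) * (g * s)) / (a * s) := by
    field_simp
  rw [broydenWeight, hD', div_div_eq_mul_div, div_mul_cancel₀ _ hD]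
  field_simp

/-- Satisfies the secant equation `broydenUpdate φ G u y *ᵥ u = y`; `φ = 1` gives DFP, `φ = 0`
BFGS. -/
def broydenUpdate (φ : 𝕜) (G : Matrix m m 𝕜) (u y : m → 𝕜) : Matrix m m 𝕜 :=
  φ • (G - (u ⬝ᵥ y)⁻¹ • (vecMulVec y (G *ᵥ u) + vecMulVec (G *ᵥ u) y)
      + ((u ⬝ᵥ G *ᵥ u / (u ⬝ᵥ y) + 1) / (u ⬝ᵥ y)) • vecMulVec y y)
  + (1 - φ) • (G - (u ⬝ᵥ G *ᵥ u)⁻¹ • vecMulVec (G *ᵥ u) (G *ᵥ u)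
      + (u ⬝ᵥ y)⁻¹ • vecMulVec y y)

theorem broydenUpdate_mul_broydenUpdate_inv_eq_one {τ : 𝕜} {G : Matrix m m 𝕜} (hG : G.IsSymm)
    (hdet : IsUnit G.det) {u y : m → 𝕜} (ha : u ⬝ᵥ y ≠ 0) (hg : u ⬝ᵥ G *ᵥ u ≠ 0)
    (hs : y ⬝ᵥ G⁻¹ *ᵥ y ≠ 0)
    (hD : τ * (u ⬝ᵥ y) ^ 2 + (1 - τ) * ((u ⬝ᵥ G *ᵥ u) * (y ⬝ᵥ G⁻¹ *ᵥ y)) ≠ 0) :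
    broydenUpdate (broydenWeight τ (u ⬝ᵥ y) (u ⬝ᵥ G *ᵥ u) (y ⬝ᵥ G⁻¹ *ᵥ y)) G u y
      * broydenUpdate (1 - τ) G⁻¹ y u = 1 := by
  have hGinv : G * G⁻¹ = 1 := mul_nonsing_inv G hdet
  have hGy : G *ᵥ (G⁻¹ *ᵥ y) = y := by rw [mulVec_mulVec, hGinv, one_mulVec]
  have hGu : G⁻¹ *ᵥ (G *ᵥ u) = u := by rw [mulVec_mulVec, nonsing_inv_mul G hdet, one_mulVec]
  have hyu : y ⬝ᵥ u = u ⬝ᵥ y := dotProduct_comm _ _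
  have hGuu : G *ᵥ u ⬝ᵥ u = u ⬝ᵥ G *ᵥ u := dotProduct_comm _ _
  have hGuGy : G *ᵥ u ⬝ᵥ G⁻¹ *ᵥ y = u ⬝ᵥ y := by
    rw [← hG.vecMul_eq_mulVec, ← dotProduct_mulVec, hGy]
  have hφ := broydenWeight_mul ha hs hD
  generalize broydenWeight τ (u ⬝ᵥ y) (u ⬝ᵥ G *ᵥ u) (y ⬝ᵥ G⁻¹ *ᵥ y) = φ at hφ ⊢
  simp only [broydenUpdate, mul_add, add_mul, mul_sub, sub_mul, smul_mul_assoc, mul_smul_comm,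
    smul_smul, smul_add, smul_sub, mul_vecMulVec, vecMulVec_mul, vecMulVec_mulVec, op_smul_eq_smul,
    smul_vecMulVec, hGinv, hGy, hGu, hG.inv.vecMul_eq_mulVec, hyu, hGuu, hGuGy]
  match_scalars
  · ring
  all_goals field_simp
  all_goals first | linear_combination hφ | linear_combination -hφ

end BroydenFamily

theorem broyd_eq_broydenUpdate {n : ℕ} {τ : ℝ} {A G : Matrix (Fin n) (Fin n) ℝ}
    (hA : A.IsSymm) (hG : G.IsSymm) {u : Fin n → ℝ} (hu : u ≠ 0) :
    broyd τ A G u = broydenUpdate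
      (broydenWeight τ (u ⬝ᵥ A *ᵥ u) (u ⬝ᵥ G *ᵥ u) (u ⬝ᵥ (A * G⁻¹ * A) *ᵥ u))
      G u (A *ᵥ u) := by
  simp only [broyd, if_neg hu, broydenUpdate, broydenWeight, mul_vecMulVec, vecMulVec_mul,
    hA.vecMul_eq_mulVec, hG.vecMul_eq_mulVec]

theorem broydenUpdate_inv_mulVec_eq {n : ℕ} {A G : Matrix (Fin n) (Fin n) ℝ} (hA : A.IsSymm)
    (hG : G.IsSymm) (u : Fin n → ℝ) (τ : ℝ) :
    broydenUpdate (1 - τ) G⁻¹ (A *ᵥ u) u =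
      τ • (G⁻¹ - (u ⬝ᵥ (A * G⁻¹ * A).mulVec u)⁻¹ •
              (G⁻¹ * A * vecMulVec u u * A * G⁻¹) +
            (u ⬝ᵥ A.mulVec u)⁻¹ • vecMulVec u u) +
      (1 - τ) • (G⁻¹ - (u ⬝ᵥ A.mulVec u)⁻¹ •
              (G⁻¹ * A * vecMulVec u u + vecMulVec u u * A * G⁻¹) +
            (((u ⬝ᵥ (A * G⁻¹ * A).mulVec u) / (u ⬝ᵥ A.mulVec u) + 1) /
                (u ⬝ᵥ A.mulVec u)) • vecMulVec u u) := by
  rw [hA.dotProduct_mul_mul_mulVec]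
  simp only [broydenUpdate, mul_vecMulVec, vecMulVec_mul, ← mulVec_mulVec, hA.vecMul_eq_mulVec,
    hG.inv.vecMul_eq_mulVec, dotProduct_comm (A *ᵥ u) u]
  module

theorem broyd_inverse_formula_general {n : ℕ}
    (A G : Matrix (Fin n) (Fin n) ℝ) (hA : A.PosDef) (hG : G.PosDef)
    (u : Fin n → ℝ) (hu : u ≠ 0) (τ : ℝ) (hτ : τ ∈ Set.Icc (0 : ℝ) 1) :
    IsUnit (broyd τ A G u).det ∧
    (broyd τ A G u)⁻¹ =
      τ • (G⁻¹ - (u ⬝ᵥ (A * G⁻¹ * A).mulVec u)⁻¹ •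
              (G⁻¹ * A * vecMulVec u u * A * G⁻¹) +
            (u ⬝ᵥ A.mulVec u)⁻¹ • vecMulVec u u) +
      (1 - τ) • (G⁻¹ - (u ⬝ᵥ A.mulVec u)⁻¹ •
              (G⁻¹ * A * vecMulVec u u + vecMulVec u u * A * G⁻¹) +
            (((u ⬝ᵥ (A * G⁻¹ * A).mulVec u) / (u ⬝ᵥ A.mulVec u) + 1) /
                (u ⬝ᵥ A.mulVec u)) • vecMulVec u u) := by
  have hAs : A.IsSymm := isHermitian_iff_isSymm.mp hA.isHermitian
  have hGs : G.IsSymm := isHermitian_iff_isSymm.mp hG.isHermitian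
  have hdet : IsUnit G.det := (isUnit_iff_isUnit_det G).mp hG.isUnit
  have ha : 0 < u ⬝ᵥ A *ᵥ u := by simpa using hA.dotProduct_mulVec_pos hu
  have hg : 0 < u ⬝ᵥ G *ᵥ u := by simpa using hG.dotProduct_mulVec_pos hu
  have hAu : A *ᵥ u ≠ 0 := fun h ↦ by simp [h] at ha
  have hs : 0 < A *ᵥ u ⬝ᵥ G⁻¹ *ᵥ (A *ᵥ u) := by
    simpa using hG.inv.dotProduct_mulVec_pos hAu
  have hD : 0 < τ * (u ⬝ᵥ A *ᵥ u) ^ 2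
      + (1 - τ) * ((u ⬝ᵥ G *ᵥ u) * (A *ᵥ u ⬝ᵥ G⁻¹ *ᵥ (A *ᵥ u))) :=
    convex_Ioi 0 (pow_pos ha 2) (mul_pos hg hs) hτ.1 (sub_nonneg.2 hτ.2) (add_sub_cancel τ 1)
  have hmul : broyd τ A G u * broydenUpdate (1 - τ) G⁻¹ (A *ᵥ u) u = 1 := by
    rw [broyd_eq_broydenUpdate hAs hGs hu, hAs.dotProduct_mul_mul_mulVec]
    exact broydenUpdate_mul_broydenUpdate_inv_eq_one hGs hdet ha.ne' hg.ne' hs.ne' hD.ne'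
  rw [← broydenUpdate_inv_mulVec_eq hAs hGs]
  exact ⟨isUnit_det_of_right_inverse hmul, inv_eq_right_inv hmul⟩

theorem broyd_inverse_formula {n : ℕ} (hn : 1 ≤ n)
    (A G : Matrix (Fin n) (Fin n) ℝ) (hA : A.PosDef) (hG : G.PosDef)
    (u : Fin n → ℝ) (hu : u ≠ 0) (τ : ℝ) (hτ : τ ∈ Set.Icc (0 : ℝ) 1) :
    IsUnit (broyd τ A G u).det ∧
    (broyd τ A G u)⁻¹ =
      τ • (G⁻¹ - (u ⬝ᵥ (A * G⁻¹ * A).mulVec u)⁻¹ •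
              (G⁻¹ * A * vecMulVec u u * A * G⁻¹) +
            (u ⬝ᵥ A.mulVec u)⁻¹ • vecMulVec u u) +
      (1 - τ) • (G⁻¹ - (u ⬝ᵥ A.mulVec u)⁻¹ •
              (G⁻¹ * A * vecMulVec u u + vecMulVec u u * A * G⁻¹) +
            (((u ⬝ᵥ (A * G⁻¹ * A).mulVec u) / (u ⬝ᵥ A.mulVec u) + 1) /
                (u ⬝ᵥ A.mulVec u)) • vecMulVec u u) :=
  broyd_inverse_formula_general A G hA hG u hu τ hτ
end

section
/- Let A, G be symmetric positive definite n×n matrices, u ∈ ℝ^n nonzero, τ ∈ [0,1], and G₊ := Broyd_τ(A, G, u). Then det(G₊⁻¹G) = τ·⟨Au, u⟩/⟨AG⁻¹Au, u⟩ + (1−τ)·⟨Gu, u⟩/⟨Au, u⟩. -/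
open Matrix Finset

/-!
Every member of the Broyden family is a rank-two update `G₊ = G + Au v₁ᵀ + Gu v₂ᵀ` of `G`
inside the span of `Au` and `Gu`. By the matrix determinant lemma, `det (G⁻¹ G₊)` is the
`2 × 2` determinant `det (1 + (vᵢ ⬝ G⁻¹ cⱼ))` with `c₁ = Au`, `c₂ = Gu`, and since `G⁻¹ Gu = u` with
`v₁ ⬝ u = 1`, `v₂ ⬝ u = -1`, it collapses to `φ/σ + (1 - φ)/ρ`. The weight
`φ = τσ / (τσ + (1 - τ)ρ)` is exactly the one turning this into `1 / (τσ + (1 - τ)ρ)`.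
-/

namespace Matrix

variable {ι R : Type*} [Fintype ι] [CommRing R]

theorem IsSymm.vecMul_eq_mulVec_s15 {A : Matrix ι ι R} (hA : A.IsSymm) (x : ι → R) :
    x ᵥ* A = A *ᵥ x := by
  rw [← vecMul_transpose, hA.eq]

theorem det_add_vecMulVec_add_vecMulVec [DecidableEq ι] {G : Matrix ι ι R} (hG : IsUnit G.det)
    (a b v w : ι → R) :
    (G + vecMulVec a v + vecMulVec b w).det =
      G.det * ((1 + v ⬝ᵥ G⁻¹ *ᵥ a) * (1 + w ⬝ᵥ G⁻¹ *ᵥ b) - (v ⬝ᵥ G⁻¹ *ᵥ b) * (w ⬝ᵥ G⁻¹ *ᵥ a)) := by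
  have hUV : vecMulVec a v + vecMulVec b w = (of ![a, b])ᵀ * of ![v, w] := by
    ext i j
    simp [mul_apply, Fin.sum_univ_two, vecMulVec_apply]
  have hVGU (k l : Fin 2) :
      (of ![v, w] * G⁻¹ * (of ![a, b])ᵀ) k l = ![v, w] k ⬝ᵥ G⁻¹ *ᵥ ![a, b] l := by
    rw [Matrix.mul_assoc]
    simp [mul_apply, dotProduct, mulVec, Finset.mul_sum]
  rw [add_assoc, hUV, det_add_mul _ _ hG, det_fin_two]
  simp only [add_apply, hVGU]
  simp

end Matrix

theorem div_mul_inv_add_one_sub_div_mul_inv {τ σ ρ : ℝ} (hσ : σ ≠ 0) (hρ : ρ ≠ 0)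
    (hD : τ * σ + (1 - τ) * ρ ≠ 0) :
    τ * σ / (τ * σ + (1 - τ) * ρ) * σ⁻¹ + (1 - τ * σ / (τ * σ + (1 - τ) * ρ)) * ρ⁻¹ =
      (τ * σ + (1 - τ) * ρ)⁻¹ := by
  field_simp
  ring

/-- The weight `φ_τ` that `broyd` gives to the DFP update. -/
noncomputable def broydWeight {n : ℕ} (τ : ℝ) (A G : Matrix (Fin n) (Fin n) ℝ) (u : Fin n → ℝ) :
    ℝ :=
  τ * ((u ⬝ᵥ A *ᵥ u) / (u ⬝ᵥ (A * G⁻¹ * A) *ᵥ u)) /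
    (τ * ((u ⬝ᵥ A *ᵥ u) / (u ⬝ᵥ (A * G⁻¹ * A) *ᵥ u)) +
      (1 - τ) * ((u ⬝ᵥ G *ᵥ u) / (u ⬝ᵥ A *ᵥ u)))

section Broyden

variable {n : ℕ} (τ : ℝ) {A G : Matrix (Fin n) (Fin n) ℝ} {u : Fin n → ℝ}

theorem broyd_eq_add_vecMulVec (hA : A.IsSymm) (hG : G.IsSymm) (hα : u ⬝ᵥ A *ᵥ u ≠ 0)
    (hγ : u ⬝ᵥ G *ᵥ u ≠ 0) :
    broyd τ A G u = G
      + vecMulVec (A *ᵥ u) ((u ⬝ᵥ A *ᵥ u)⁻¹ •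
          ((1 + broydWeight τ A G u * ((u ⬝ᵥ G *ᵥ u) / (u ⬝ᵥ A *ᵥ u))) • A *ᵥ u
            - broydWeight τ A G u • G *ᵥ u))
      + vecMulVec (G *ᵥ u) (-(broydWeight τ A G u / (u ⬝ᵥ A *ᵥ u)) • A *ᵥ u
          - ((1 - broydWeight τ A G u) / (u ⬝ᵥ G *ᵥ u)) • G *ᵥ u) := by
  have hu : u ≠ 0 := by rintro rfl; simp at hα
  rw [broyd, if_neg hu]
  change broydWeight τ A G u • _ + (1 - broydWeight τ A G u) • _ = _
  generalize broydWeight τ A G u = φ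
  simp only [mul_vecMulVec, vecMulVec_mul, hA.vecMul_eq_mulVec_s15, hG.vecMul_eq_mulVec_s15]
  ext i j
  simp only [Matrix.add_apply, Matrix.sub_apply, Matrix.smul_apply, vecMulVec_apply, smul_eq_mul,
    Pi.sub_apply, Pi.smul_apply]
  field_simp
  ring

theorem det_broyd (hA : A.IsSymm) (hG : G.IsSymm) (hGdet : IsUnit G.det)
    (hα : u ⬝ᵥ A *ᵥ u ≠ 0) (hγ : u ⬝ᵥ G *ᵥ u ≠ 0) :
    (broyd τ A G u).det =
      G.det * (broydWeight τ A G u * ((u ⬝ᵥ A *ᵥ u) / (u ⬝ᵥ (A * G⁻¹ * A) *ᵥ u))⁻¹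
        + (1 - broydWeight τ A G u) * ((u ⬝ᵥ G *ᵥ u) / (u ⬝ᵥ A *ᵥ u))⁻¹) := by
  have hAGA : u ⬝ᵥ (A * G⁻¹ * A) *ᵥ u = A *ᵥ u ⬝ᵥ G⁻¹ *ᵥ A *ᵥ u := by
    rw [← mulVec_mulVec, ← mulVec_mulVec, dotProduct_mulVec, hA.vecMul_eq_mulVec_s15]
  have hGGA : G *ᵥ u ⬝ᵥ G⁻¹ *ᵥ A *ᵥ u = u ⬝ᵥ A *ᵥ u := by
    rw [← hG.vecMul_eq_mulVec_s15, ← dotProduct_mulVec, mulVec_mulVec, mul_nonsing_inv G hGdet,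
      one_mulVec]
  have hGGu : G⁻¹ *ᵥ G *ᵥ u = u := by
    rw [mulVec_mulVec, nonsing_inv_mul G hGdet, one_mulVec]
  rw [broyd_eq_add_vecMulVec τ hA hG hα hγ, det_add_vecMulVec_add_vecMulVec hGdet, hGGu, hAGA]
  generalize broydWeight τ A G u = φ
  simp only [sub_dotProduct, smul_dotProduct, hGGA, smul_eq_mul]
  rw [dotProduct_comm (A *ᵥ u) u, dotProduct_comm (G *ᵥ u) u]
  field_simp
  ring

end Broyden

theorem broyd_det_formula_general {n : ℕ}
    (A G : Matrix (Fin n) (Fin n) ℝ) (hA : A.PosDef) (hG : G.PosDef)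
    (u : Fin n → ℝ) (hu : u ≠ 0) (τ : ℝ) (hτ : τ ∈ Set.Icc (0 : ℝ) 1) :
    ((broyd τ A G u)⁻¹ * G).det =
      τ * ((u ⬝ᵥ A.mulVec u) / (u ⬝ᵥ (A * G⁻¹ * A).mulVec u)) +
      (1 - τ) * ((u ⬝ᵥ G.mulVec u) / (u ⬝ᵥ A.mulVec u)) := by
  have hα : 0 < u ⬝ᵥ A *ᵥ u := by simpa using hA.dotProduct_mulVec_pos hu
  have hγ : 0 < u ⬝ᵥ G *ᵥ u := by simpa using hG.dotProduct_mulVec_pos hu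
  have hβ : 0 < u ⬝ᵥ (A * G⁻¹ * A) *ᵥ u := by
    have hAGA := hG.inv.conjTranspose_mul_mul_same (mulVec_injective_iff_isUnit.mpr hA.isUnit)
    rw [hA.1.eq] at hAGA
    simpa using hAGA.dotProduct_mulVec_pos hu
  set σ := (u ⬝ᵥ A *ᵥ u) / (u ⬝ᵥ (A * G⁻¹ * A) *ᵥ u)
  set ρ := (u ⬝ᵥ G *ᵥ u) / (u ⬝ᵥ A *ᵥ u)
  have hσ : 0 < σ := div_pos hα hβ
  have hρ : 0 < ρ := div_pos hγ hα
  have hD : 0 < τ * σ + (1 - τ) * ρ := by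
    obtain ⟨hτ0, hτ1⟩ := hτ
    rcases hτ0.eq_or_lt with rfl | hτ0
    · simpa using hρ
    · nlinarith [mul_pos hτ0 hσ, mul_nonneg (sub_nonneg.2 hτ1) hρ.le]
  have hGdet : G.det ≠ 0 := hG.det_pos.ne'
  rw [det_mul, det_nonsing_inv, Ring.inverse_eq_inv',
    det_broyd τ (isHermitian_iff_isSymm.mp hA.1) (isHermitian_iff_isSymm.mp hG.1) hGdet.isUnit
      hα.ne' hγ.ne', broydWeight, div_mul_inv_add_one_sub_div_mul_inv hσ.ne' hρ.ne' hD.ne']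
  field_simp

theorem broyd_det_formula {n : ℕ} (hn : 1 ≤ n)
    (A G : Matrix (Fin n) (Fin n) ℝ) (hA : A.PosDef) (hG : G.PosDef)
    (u : Fin n → ℝ) (hu : u ≠ 0) (τ : ℝ) (hτ : τ ∈ Set.Icc (0 : ℝ) 1) :
    ((broyd τ A G u)⁻¹ * G).det =
      τ * ((u ⬝ᵥ A.mulVec u) / (u ⬝ᵥ (A * G⁻¹ * A).mulVec u)) +
      (1 - τ) * ((u ⬝ᵥ G.mulVec u) / (u ⬝ᵥ A.mulVec u)) :=
  broyd_det_formula_general A G hA hG u hu τ hτ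
end

section
/- Let a_1, …, a_m ∈ ℝ^n with ‖a_i‖ ≤ γ for all i (Euclidean norm), b_1, …, b_m ∈ ℝ, and define the log-sum-exp function f₀(x) := ln(Σ_{i=1}^m exp(⟨a_i, x⟩ + b_i)). Then for all x, h ∈ ℝ^n: the second directional derivative satisfies ⟨∇²f₀(x)h, h⟩ ≤ γ²·‖h‖², and the third directional derivative satisfies D³f₀(x)[h,h,h] ≤ 2γ·‖h‖·⟨∇²f₀(x)h, h⟩ ≤ 2γ³·‖h‖³. -/
/-!
Along the line `t ↦ x + t • h`, `f₀` is `t ↦ log ∑ᵢ exp (cᵢ t + dᵢ)` with `cᵢ = ⟪aᵢ, h⟫`, so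
`|cᵢ| ≤ γ‖h‖`. Its second and third derivatives are the variance and the third central moment of
`c` under the softmax weights `πᵢ ∝ exp (cᵢ t + dᵢ)`. The variance is at most `E c² ≤ (γ‖h‖)²`,
and since every deviation `cᵢ - E c` is at most `2γ‖h‖`, the third central moment is at most
`2γ‖h‖` times the variance.
-/

open Finset Real

section WeightedMoments

variable {ι : Type*} [Fintype ι] (w c : ι → ℝ)

def weightedMoment (k : ℕ) : ℝ := ∑ i, w i * c i ^ k

local notation "M" => weightedMoment w c

lemma sum_mul_centered_sq :
    ∑ i, w i * (M 0 * c i - M 1) ^ 2 = M 0 * (M 0 * M 2 - M 1 ^ 2) := by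
  have expand : ∀ i, w i * (M 0 * c i - M 1) ^ 2 =
      M 0 ^ 2 * (w i * c i ^ 2) - 2 * M 0 * M 1 * (w i * c i ^ 1) + M 1 ^ 2 * (w i * c i ^ 0) :=
    fun i => by ring
  simp only [expand, sum_add_distrib, sum_sub_distrib, ← mul_sum]
  unfold weightedMoment
  ring

lemma sum_mul_centered_cube :
    ∑ i, w i * (M 0 * c i - M 1) ^ 3 =
      M 0 * (M 0 ^ 2 * M 3 - 3 * M 0 * M 1 * M 2 + 2 * M 1 ^ 3) := by
  have expand : ∀ i, w i * (M 0 * c i - M 1) ^ 3 =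
      M 0 ^ 3 * (w i * c i ^ 3) - 3 * M 0 ^ 2 * M 1 * (w i * c i ^ 2)
        + 3 * M 0 * M 1 ^ 2 * (w i * c i ^ 1) - M 1 ^ 3 * (w i * c i ^ 0) :=
    fun i => by ring
  simp only [expand, sum_add_distrib, sum_sub_distrib, ← mul_sum]
  unfold weightedMoment
  ring

variable {w c} {B : ℝ} (hw : ∀ i, 0 ≤ w i) (hc : ∀ i, |c i| ≤ B)
include hw hc

lemma weightedMoment_two_le : M 2 ≤ B ^ 2 * M 0 := by
  simp only [weightedMoment, mul_sum, pow_zero, mul_one]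
  refine sum_le_sum fun i _ => ?_
  rw [mul_comm]
  exact mul_le_mul_of_nonneg_right (sq_le_sq' (abs_le.mp (hc i)).1 (abs_le.mp (hc i)).2) (hw i)

lemma weightedMoment_variance_le : M 0 * M 2 - M 1 ^ 2 ≤ B ^ 2 * M 0 ^ 2 := by
  have hM0 : 0 ≤ M 0 := sum_nonneg fun i _ => by simpa using hw i
  nlinarith [weightedMoment_two_le hw hc, sq_nonneg (M 1)]

lemma weightedMoment_zero_mul_sub_one_le (i : ι) : M 0 * c i - M 1 ≤ 2 * B * M 0 := by
  have : M 0 * c i - M 1 = ∑ j, w j * (c i - c j) := by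
    simp only [weightedMoment, mul_sub, sum_sub_distrib, ← sum_mul]; simp
  rw [this, weightedMoment, mul_sum]
  refine sum_le_sum fun j _ => ?_
  obtain ⟨hci, hci'⟩ := abs_le.mp (hc i)
  obtain ⟨hcj, hcj'⟩ := abs_le.mp (hc j)
  nlinarith [hw j]

lemma weightedMoment_thirdCentral_le (hM0 : 0 < M 0) :
    M 0 ^ 2 * M 3 - 3 * M 0 * M 1 * M 2 + 2 * M 1 ^ 3 ≤
      2 * B * M 0 * (M 0 * M 2 - M 1 ^ 2) := by
  refine le_of_mul_le_mul_left ?_ hM0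
  calc M 0 * (M 0 ^ 2 * M 3 - 3 * M 0 * M 1 * M 2 + 2 * M 1 ^ 3)
      = ∑ i, w i * (M 0 * c i - M 1) ^ 3 := (sum_mul_centered_cube w c).symm
    _ ≤ ∑ i, 2 * B * M 0 * (w i * (M 0 * c i - M 1) ^ 2) := by
      refine sum_le_sum fun i _ => ?_
      have := mul_le_mul_of_nonneg_left (weightedMoment_zero_mul_sub_one_le hw hc i)
        (mul_nonneg (hw i) (sq_nonneg (M 0 * c i - M 1)))
      linarith
    _ = M 0 * (2 * B * M 0 * (M 0 * M 2 - M 1 ^ 2)) := by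
      rw [← mul_sum, sum_mul_centered_sq]; ring

end WeightedMoments

section LogSumExp

variable {ι : Type*} [Fintype ι] (c d : ι → ℝ)

noncomputable def expMoment (k : ℕ) (t : ℝ) : ℝ :=
  weightedMoment (fun i => exp (c i * t + d i)) c k

lemma expMoment_zero (t : ℝ) : expMoment c d 0 t = ∑ i, exp (c i * t + d i) := by
  simp [expMoment, weightedMoment]

lemma hasDerivAt_expMoment (k : ℕ) (t : ℝ) :
    HasDerivAt (expMoment c d k) (expMoment c d (k + 1) t) t := by
  have hterm : ∀ i ∈ univ, HasDerivAt (fun s => exp (c i * s + d i) * c i ^ k)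
      (exp (c i * t + d i) * c i ^ (k + 1)) t := fun i _ => by
    refine ((((hasDerivAt_id' t).const_mul (c i)).add_const (d i)).exp.mul_const
      (c i ^ k)).congr_deriv ?_
    ring
  exact HasDerivAt.fun_sum hterm

variable [Nonempty ι]

lemma expMoment_zero_pos (t : ℝ) : 0 < expMoment c d 0 t := by
  rw [expMoment_zero]
  exact sum_pos (fun i _ => exp_pos _) univ_nonempty

local notation "M" => expMoment c d

lemma deriv_log_expMoment :
    deriv (fun t => log (M 0 t)) = fun t => M 1 t / M 0 t :=
  funext fun t => ((hasDerivAt_expMoment c d 0 t).log (expMoment_zero_pos c d t).ne').deriv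

lemma iteratedDeriv_two_log_expMoment :
    iteratedDeriv 2 (fun t => log (M 0 t)) =
      fun t => (M 0 t * M 2 t - M 1 t ^ 2) / M 0 t ^ 2 := by
  rw [iteratedDeriv_succ, iteratedDeriv_one, deriv_log_expMoment]
  funext t
  refine (((hasDerivAt_expMoment c d 1 t).div (hasDerivAt_expMoment c d 0 t)
    (expMoment_zero_pos c d t).ne').congr_deriv ?_).deriv
  ring

lemma iteratedDeriv_three_log_expMoment :
    iteratedDeriv 3 (fun t => log (M 0 t)) =
      fun t => (M 0 t ^ 2 * M 3 t - 3 * M 0 t * M 1 t * M 2 t + 2 * M 1 t ^ 3) / M 0 t ^ 3 := by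
  rw [iteratedDeriv_succ, iteratedDeriv_two_log_expMoment]
  funext t
  have hM0 := (expMoment_zero_pos c d t).ne'
  have hM := hasDerivAt_expMoment c d
  refine (((((hM 0 t).mul (hM 2 t)).sub ((hM 1 t).fun_pow 2)).fun_div ((hM 0 t).fun_pow 2)
    (pow_ne_zero 2 hM0)).congr_deriv ?_).deriv
  simp only [Pi.mul_apply, Pi.sub_apply]
  field_simp
  ring

end LogSumExp

section LogSumExpBounds

variable {ι : Type*} [Fintype ι] [Nonempty ι] {c : ι → ℝ} (d : ι → ℝ) {B : ℝ}
  (hc : ∀ i, |c i| ≤ B) (t : ℝ)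
include hc

theorem iteratedDeriv_two_log_expMoment_le :
    iteratedDeriv 2 (fun t => log (expMoment c d 0 t)) t ≤ B ^ 2 := by
  rw [iteratedDeriv_two_log_expMoment, div_le_iff₀ (pow_pos (expMoment_zero_pos c d t) 2)]
  exact weightedMoment_variance_le (fun i => (exp_pos _).le) hc

theorem iteratedDeriv_three_log_expMoment_le :
    iteratedDeriv 3 (fun t => log (expMoment c d 0 t)) t ≤
      2 * B * iteratedDeriv 2 (fun t => log (expMoment c d 0 t)) t := by
  rw [iteratedDeriv_three_log_expMoment, iteratedDeriv_two_log_expMoment]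
  have hM0 := expMoment_zero_pos c d t
  calc _ ≤ 2 * B * expMoment c d 0 t *
        (expMoment c d 0 t * expMoment c d 2 t - expMoment c d 1 t ^ 2) / expMoment c d 0 t ^ 3 :=
        div_le_div_of_nonneg_right
          (weightedMoment_thirdCentral_le (fun i => (exp_pos _).le) hc hM0) (by positivity)
    _ = _ := by field_simp

end LogSumExpBounds

open RealInnerProductSpace

theorem log_sum_exp_derivative_bounds_general {n m : ℕ} (hm : 1 ≤ m)
    (a : Fin m → EuclideanSpace ℝ (Fin n)) (b : Fin m → ℝ)
    (γ : ℝ) (ha : ∀ i, ‖a i‖ ≤ γ)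
    (f₀ : EuclideanSpace ℝ (Fin n) → ℝ)
    (hf₀ : f₀ = fun x => Real.log (∑ i, Real.exp (⟪a i, x⟫ + b i)))
    (x h : EuclideanSpace ℝ (Fin n)) :
    iteratedDeriv 2 (fun t : ℝ => f₀ (x + t • h)) 0 ≤ γ ^ 2 * ‖h‖ ^ 2 ∧
    iteratedDeriv 3 (fun t : ℝ => f₀ (x + t • h)) 0 ≤
      2 * γ * ‖h‖ * iteratedDeriv 2 (fun t : ℝ => f₀ (x + t • h)) 0 ∧
    2 * γ * ‖h‖ * iteratedDeriv 2 (fun t : ℝ => f₀ (x + t • h)) 0 ≤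
      2 * γ ^ 3 * ‖h‖ ^ 3 := by
  have : Nonempty (Fin m) := ⟨⟨0, hm⟩⟩
  have hγ : 0 ≤ γ := (norm_nonneg _).trans (ha ⟨0, hm⟩)
  set c : Fin m → ℝ := fun i => ⟪a i, h⟫
  set d : Fin m → ℝ := fun i => ⟪a i, x⟫ + b i
  have hline : (fun t : ℝ => f₀ (x + t • h)) = fun t => log (expMoment c d 0 t) := by
    funext t
    simp only [hf₀, expMoment_zero, c, d, inner_add_right, real_inner_smul_right]
    exact congrArg log (sum_congr rfl fun i _ => congrArg exp (by ring))
  have hc : ∀ i, |c i| ≤ γ * ‖h‖ := fun i =>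
    (abs_real_inner_le_norm _ _).trans (mul_le_mul_of_nonneg_right (ha i) (norm_nonneg h))
  have h2 := iteratedDeriv_two_log_expMoment_le d hc 0
  have h3 := iteratedDeriv_three_log_expMoment_le d hc 0
  rw [hline]
  refine ⟨by linarith [mul_pow γ ‖h‖ 2], by linarith, ?_⟩
  calc _ ≤ 2 * γ * ‖h‖ * (γ * ‖h‖) ^ 2 :=
        mul_le_mul_of_nonneg_left h2 (by positivity)
    _ = 2 * γ ^ 3 * ‖h‖ ^ 3 := by ring

theorem log_sum_exp_derivative_bounds {n m : ℕ} (hn : 1 ≤ n) (hm : 1 ≤ m)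
    (a : Fin m → EuclideanSpace ℝ (Fin n)) (b : Fin m → ℝ)
    (γ : ℝ) (hγ : 0 < γ) (ha : ∀ i, ‖a i‖ ≤ γ)
    (f₀ : EuclideanSpace ℝ (Fin n) → ℝ)
    (hf₀ : f₀ = fun x => Real.log (∑ i, Real.exp (⟪a i, x⟫ + b i)))
    (x h : EuclideanSpace ℝ (Fin n)) :
    iteratedDeriv 2 (fun t : ℝ => f₀ (x + t • h)) 0 ≤ γ ^ 2 * ‖h‖ ^ 2 ∧
    iteratedDeriv 3 (fun t : ℝ => f₀ (x + t • h)) 0 ≤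
      2 * γ * ‖h‖ * iteratedDeriv 2 (fun t : ℝ => f₀ (x + t • h)) 0 ∧
    2 * γ * ‖h‖ * iteratedDeriv 2 (fun t : ℝ => f₀ (x + t • h)) 0 ≤
      2 * γ ^ 3 * ‖h‖ ^ 3 :=
  log_sum_exp_derivative_bounds_general hm a b γ ha f₀ hf₀ x h
end
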